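/- arXiv:1402.6111 — 4 statements merged into one kernel-verified Lean document; each statement's English description precedes it below -/
import Mathlib

section
/- Let k be a field of characteristic 0, G a group, r and m natural numbers, and V a finite-dimensional representation of G over k. Let K ≤ S_{rm} be the subgroup of all permutations σ of {1, …, rm} for which there exists a permutation τ of {1, …, r} such that σ maps the block B_i = {(i−1)m+1, …, im} onto the block B_{τ(i)} for every i (so K is the wreath product S_m ≀ S_r permuting r blocks of size m). Then the dimension of the space of G-invariant vectors in Sym^r(Sym^m V), i.e. dim_k ((Sym^r(Sym^m V))^G), equals the dimension of the subspace of K-fixed vectors in (V^{⊗rm})^G, where S_{rm} acts on V^{⊗rm} by permuting tensor factors (an action commuting with the diagonal G-action). -/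
/-!
Formalization of statements from "Tensor invariants" (arXiv:1402.6111).
-/

open scoped TensorProduct

noncomputable section

namespace TensorInv

variable {k G V W : Type} [Field k] [Group G]
  [AddCommGroup V] [Module k V] [AddCommGroup W] [Module k W]

/-- The diagonal representation of `G` on the `r`-th tensor power of `V`:
`g • (v₁ ⊗ ⋯ ⊗ v_r) = g v₁ ⊗ ⋯ ⊗ g v_r`. -/
def tpowRep (ρ : Representation k G V) (r : ℕ) : Representation k G (⨂[k]^r V) where
  toFun g := PiTensorProduct.map (fun _ => ρ g)
  map_one' := by simp [PiTensorProduct.map_id]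
  map_mul' g h := by
    show PiTensorProduct.map _ = PiTensorProduct.map _ * PiTensorProduct.map _
    rw [Module.End.mul_eq_comp, ← PiTensorProduct.map_comp]
    congr 1; funext i; rw [map_mul]; rfl

/-- The representation of the symmetric group `S_r` on `⨂[k]^r V` permuting the tensor
factors: the `i`-th factor of `σ • (v₁ ⊗ ⋯ ⊗ v_r)` is `v_{σ⁻¹(i)}`. -/
def permRep (k V : Type) [Field k] [AddCommGroup V] [Module k V] (r : ℕ) :
    Representation k (Equiv.Perm (Fin r)) (⨂[k]^r V) where
  toFun σ := (PiTensorProduct.reindex k (fun _ : Fin r => V) σ).toLinearMap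
  map_one' := by
    show (PiTensorProduct.reindex k (fun _ : Fin r => V) (Equiv.refl (Fin r))).toLinearMap = _
    rw [PiTensorProduct.reindex_refl]; rfl
  map_mul' σ τ := by
    show (PiTensorProduct.reindex k (fun _ : Fin r => V) (τ.trans σ)).toLinearMap = _
    rw [← PiTensorProduct.reindex_trans]; rfl

/-- The `S_r`-action and the diagonal `G`-action on `⨂[k]^r V` commute. -/
lemma perm_tpow_comm (ρ : Representation k G V) (r : ℕ) (σ : Equiv.Perm (Fin r)) (g : G) :
    (permRep k V r σ) ∘ₗ (tpowRep ρ r g) = (tpowRep ρ r g) ∘ₗ (permRep k V r σ) := by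
  ext v
  simp [tpowRep, permRep, PiTensorProduct.reindex_tprod, Function.comp_def]

/-- `Hom_G(V, W)`: the space of `G`-equivariant linear maps, as a submodule of `V →ₗ[k] W`. -/
def equivariantHom (ρV : Representation k G V) (ρW : Representation k G W) :
    Submodule k (V →ₗ[k] W) where
  carrier := {f | ∀ g : G, f ∘ₗ ρV g = ρW g ∘ₗ f}
  zero_mem' g := by ext v; simp
  add_mem' := by
    intro f₁ f₂ h₁ h₂ g
    ext v
    have e₁ := LinearMap.congr_fun (h₁ g) v
    have e₂ := LinearMap.congr_fun (h₂ g) v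
    simp only [LinearMap.comp_apply, LinearMap.add_apply] at *
    rw [e₁, e₂, map_add]
  smul_mem' := by
    intro c f hf g
    ext v
    have e := LinearMap.congr_fun (hf g) v
    simp only [LinearMap.comp_apply, LinearMap.smul_apply] at *
    rw [e, map_smul]

/-- The submodule of linear maps `f : V →ₗ[k] W` satisfying the twisted intertwining
relations `f ∘ₗ a = c • (b ∘ₗ f)` for every triple `(a, c, b) ∈ S`. -/
def relHom (S : Set ((V →ₗ[k] V) × k × (W →ₗ[k] W))) : Submodule k (V →ₗ[k] W) where
  carrier := {f | ∀ p ∈ S, f ∘ₗ p.1 = p.2.1 • (p.2.2 ∘ₗ f)}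
  zero_mem' := by intro p _; ext v; simp
  add_mem' := by
    intro f g hf hg p hp
    ext v
    have h1 := LinearMap.congr_fun (hf p hp) v
    have h2 := LinearMap.congr_fun (hg p hp) v
    simp only [LinearMap.comp_apply, LinearMap.add_apply, LinearMap.smul_apply] at *
    rw [h1, h2, map_add, smul_add]
  smul_mem' := by
    intro c f hf p hp
    ext v
    have h1 := LinearMap.congr_fun (hf p hp) v
    simp only [LinearMap.comp_apply, LinearMap.smul_apply] at *
    rw [h1, map_smul, smul_comm]

/-- The submodule of vectors `x` satisfying `a x = c • x` for every pair `(a, c) ∈ S`. -/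
def relVec (S : Set ((V →ₗ[k] V) × k)) : Submodule k V where
  carrier := {x | ∀ p ∈ S, p.1 x = p.2 • x}
  zero_mem' := by intro p _; simp
  add_mem' := by intro x y hx hy p hp; rw [map_add, hx p hp, hy p hp, smul_add]
  smul_mem' := by intro c x hx p hp; rw [map_smul, hx p hp, smul_comm]

/-- The subspace of `⨂[k]^r V` spanned by the differences
`v₁ ⊗ ⋯ ⊗ v_r − v_{σ(1)} ⊗ ⋯ ⊗ v_{σ(r)}`. -/
def symRel (k V : Type) [Field k] [AddCommGroup V] [Module k V] (r : ℕ) :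
    Submodule k (⨂[k]^r V) :=
  Submodule.span k {x | ∃ (v : Fin r → V) (σ : Equiv.Perm (Fin r)),
    x = PiTensorProduct.tprod k v - PiTensorProduct.tprod k (fun i => v (σ i))}

/-- The `r`-th symmetric power `Sym^r V`, realized as the quotient of the `r`-th tensor
power by the span of the differences of pure tensors differing by a permutation of the
factors. -/
abbrev SymPow (k V : Type) [Field k] [AddCommGroup V] [Module k V] (r : ℕ) :=
  (⨂[k]^r V) ⧸ symRel k V r

lemma symRel_le_comap (ρ : Representation k G V) (r : ℕ) (g : G) :
    symRel k V r ≤ (symRel k V r).comap (tpowRep ρ r g) := by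
  refine Submodule.span_le.2 ?_
  rintro x ⟨v, σ, rfl⟩
  simp only [SetLike.mem_coe, Submodule.mem_comap, map_sub]
  have h1 : tpowRep ρ r g (PiTensorProduct.tprod k v)
      = PiTensorProduct.tprod k (fun i => ρ g (v i)) := by
    simp [tpowRep]
  have h2 : tpowRep ρ r g (PiTensorProduct.tprod k (fun i => v (σ i)))
      = PiTensorProduct.tprod k (fun i => ρ g (v (σ i))) := by
    simp [tpowRep]
  rw [h1, h2]
  exact Submodule.subset_span ⟨fun i => ρ g (v i), σ, rfl⟩

/-- The representation of `G` on `Sym^r V` induced by a representation on `V`. -/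
def symPowRep (ρ : Representation k G V) (r : ℕ) : Representation k G (SymPow k V r) where
  toFun g := Submodule.mapQ _ _ (tpowRep ρ r g) (symRel_le_comap ρ r g)
  map_one' := by
    refine Submodule.linearMap_qext _ ?_
    ext x
    simp [Submodule.mapQ_apply]
  map_mul' g h := by
    refine Submodule.linearMap_qext _ ?_
    ext x
    simp [Submodule.mapQ_apply]

/-- The predicate cutting out the wreath-product subgroup `K ≅ S_m ≀ S_r` of the symmetric
group on `{0, …, rm−1}`: there is a permutation `τ` of the `r` consecutive blocks of size
`m` such that `σ` maps the `i`-th block onto the `τ(i)`-th block, the block of an index `j`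
being `j / m`. -/
def BlockWreath (r m : ℕ) (σ : Equiv.Perm (Fin (r * m))) : Prop :=
  ∃ τ : Equiv.Perm (Fin r), ∀ (i : Fin r) (j : Fin (r * m)),
    (j : ℕ) / m = (i : ℕ) → ((σ j : ℕ)) / m = ((τ i : Fin r) : ℕ)

/-!
Let `q : V^{⊗rm} → Sym^r (Sym^m V)` be the quotient map, symmetrizing within each of the `r`
blocks of `m` consecutive factors and then among the blocks. It is surjective, `G`-equivariant
and invariant under the wreath product `K = S_m ≀ S_r`. In characteristic `0`, symmetrizing each
block and then averaging over `K` descends to a map `h : Sym^r (Sym^m V) → V^{⊗rm}` with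
`h ∘ q = e_K`, the averaging projection onto the `K`-invariants. Hence `q ∘ h = id`, and `h` and
`q` are mutually inverse between `Sym^r (Sym^m V)^G` and the `K`-fixed vectors of `(V^{⊗rm})^G`.
-/

open PiTensorProduct

section AverageMap

variable {R H X Y : Type*} [CommRing R] [Group H] [Fintype H] [Invertible (Fintype.card H : R)]
  [AddCommGroup X] [Module R X] [AddCommGroup Y] [Module R Y] (π : Representation R H X)

theorem _root_.Representation.averageMap_eq_sum :
    π.averageMap = ⅟(Fintype.card H : R) • ∑ g, π g := by
  ext x
  simp [GroupAlgebra.average]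

theorem _root_.Representation.averageMap_comp (g : H) :
    π.averageMap ∘ₗ π g = π.averageMap := by
  rw [Representation.averageMap, ← Representation.asAlgebraHom_single_one,
    ← Module.End.mul_eq_comp, ← map_mul, GroupAlgebra.mul_average_right]

theorem _root_.Representation.comp_averageMap_of_forall_comp {f : X →ₗ[R] Y}
    (hf : ∀ g, f ∘ₗ π g = f) : f ∘ₗ π.averageMap = f := by
  ext x
  have hfx (g : H) : f (π g x) = f x := LinearMap.congr_fun (hf g) x
  rw [π.averageMap_eq_sum]
  simp [hfx, ← Nat.cast_smul_eq_nsmul R, smul_smul]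

theorem _root_.Representation.averageMap_comp_comm {f : X →ₗ[R] X}
    (hf : ∀ g, f ∘ₗ π g = π g ∘ₗ f) :
    f ∘ₗ π.averageMap = π.averageMap ∘ₗ f := by
  ext x
  have hfx (g : H) : f (π g x) = π g (f x) := LinearMap.congr_fun (hf g) x
  rw [π.averageMap_eq_sum]
  simp [hfx]

theorem _root_.Representation.averageMap_apply_eq_self_iff (x : X) :
    π.averageMap x = x ↔ x ∈ π.invariants :=
  ⟨fun hx => hx ▸ π.averageMap_invariant x, π.averageMap_id x⟩

end AverageMap

theorem _root_.Representation.finrank_invariants_eq_of_comp_eq_id {R H X Y : Type*} [CommRing R]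
    [Group H] [AddCommGroup X] [Module R X] [AddCommGroup Y] [Module R Y]
    {ρX : Representation R H X} {ρY : Representation R H Y}
    (q : X →ₗ[R] Y) (h : Y →ₗ[R] X)
    (hqh : q ∘ₗ h = LinearMap.id) (hq : ∀ g, q ∘ₗ ρX g = ρY g ∘ₗ q)
    (hhq : ∀ g, (h ∘ₗ q) ∘ₗ ρX g = ρX g ∘ₗ (h ∘ₗ q)) (W : Submodule R X)
    (hW : ∀ x, x ∈ W ↔ x ∈ ρX.invariants ∧ h (q x) = x) :
    Module.finrank R ρY.invariants = Module.finrank R W := by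
  have hqh' : ∀ y, q (h y) = y := LinearMap.congr_fun hqh
  -- `h = (h ∘ q) ∘ h` with `h ∘ q` commuting with `G`
  have hh : ∀ g y, h (ρY g y) = ρX g (h y) := fun g y => by
    have := LinearMap.congr_fun (hhq g) (h y)
    simp only [LinearMap.comp_apply, hqh'] at this
    rw [← this, ← LinearMap.comp_apply q, hq, LinearMap.comp_apply, hqh']
  refine LinearEquiv.finrank_eq (LinearEquiv.ofLinearMap
    (h.restrict fun y hy => (hW _).2 ⟨fun g => ?_, by rw [hqh']⟩)
    (q.restrict fun x hx g => ?_) ?_ ?_)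
  · rw [← hh, hy g]
  · rw [← LinearMap.comp_apply, ← hq, LinearMap.comp_apply, ((hW x).1 hx).1 g]
  · ext ⟨x, hx⟩
    exact ((hW x).1 hx).2
  · ext ⟨y, hy⟩
    exact hqh' y

theorem _root_.PiTensorProduct.map_surjective {ι R : Type*} [CommSemiring R] {s t : ι → Type*}
    [∀ i, AddCommMonoid (s i)] [∀ i, Module R (s i)] [∀ i, AddCommMonoid (t i)]
    [∀ i, Module R (t i)] {f : ∀ i, s i →ₗ[R] t i} (hf : ∀ i, Function.Surjective (f i)) :
    Function.Surjective (map f) := by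
  rw [← LinearMap.range_eq_top, map_range_eq_span_tprod, eq_top_iff, ← span_tprod_eq_top]
  refine Submodule.span_mono ?_
  rintro _ ⟨v, rfl⟩
  choose w hw using fun i => hf i (v i)
  exact ⟨w, by simp only [hw]⟩

section TensorPower

variable {M : Type} [AddCommGroup M] [Module k M]

theorem permRep_tprod {n : ℕ} (σ : Equiv.Perm (Fin n)) (v : Fin n → M) :
    permRep k M n σ (tprod k v) = tprod k fun p => v (σ.symm p) :=
  reindex_tprod σ v

theorem tpowRep_tprod (ρ : Representation k G M) (n : ℕ) (g : G) (v : Fin n → M) :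
    tpowRep ρ n g (tprod k v) = tprod k fun p => ρ g (v p) :=
  map_tprod _ v

theorem symPowRep_mk (ρ : Representation k G M) (n : ℕ) (g : G) (x : ⨂[k]^n M) :
    symPowRep ρ n g (Submodule.Quotient.mk x) = Submodule.Quotient.mk (tpowRep ρ n g x) :=
  rfl

variable (k) in
def symPowMkQ (M : Type) [AddCommGroup M] [Module k M] (n : ℕ) :
    (⨂[k]^n M) →ₗ[k] SymPow k M n :=
  (symRel k M n).mkQ

theorem symRel_le_ker {N : Type} [AddCommGroup N] [Module k N] {n : ℕ}
    {L : (⨂[k]^n M) →ₗ[k] N}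
    (hL : ∀ σ, L ∘ₗ permRep k M n σ = L) : symRel k M n ≤ LinearMap.ker L := by
  refine Submodule.span_le.2 ?_
  rintro _ ⟨v, σ, rfl⟩
  have hperm : (tprod k fun i => v (σ i)) = permRep k M n σ⁻¹ (tprod k v) := by
    rw [permRep_tprod]
    rfl
  rw [SetLike.mem_coe, LinearMap.mem_ker, map_sub, hperm, ← LinearMap.comp_apply, hL, sub_self]

def symPowLift {N : Type} [AddCommGroup N] [Module k N] {n : ℕ} (L : (⨂[k]^n M) →ₗ[k] N)
    (hL : ∀ σ, L ∘ₗ permRep k M n σ = L) : SymPow k M n →ₗ[k] N :=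
  (symRel k M n).liftQ L (symRel_le_ker hL)

theorem symPowLift_comp_symPowMkQ {N : Type} [AddCommGroup N] [Module k N] {n : ℕ}
    (L : (⨂[k]^n M) →ₗ[k] N) (hL : ∀ σ, L ∘ₗ permRep k M n σ = L) :
    symPowLift L hL ∘ₗ symPowMkQ k M n = L :=
  Submodule.liftQ_mkQ _ _ _

theorem map_comp_permRep {N : Type} [AddCommGroup N] [Module k N] {n : ℕ} (f : M →ₗ[k] N)
    (σ : Equiv.Perm (Fin n)) :
    map (fun _ => f) ∘ₗ permRep k M n σ = permRep k N n σ ∘ₗ map (fun _ => f) :=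
  PiTensorProduct.ext <| MultilinearMap.ext fun v => by simp [permRep_tprod]

theorem symPow_mk_tprod_perm {n : ℕ} (u : Fin n → M) (e : Equiv.Perm (Fin n)) :
    (Submodule.Quotient.mk (tprod k fun j => u (e j)) : SymPow k M n) =
      Submodule.Quotient.mk (tprod k u) := by
  rw [Submodule.Quotient.eq, ← neg_sub]
  exact Submodule.neg_mem _ (Submodule.subset_span ⟨u, e, rfl⟩)

variable (k V) in
/-- Defined through tensor-product bases; `regroup_tprod` is its value on pure tensors. -/
def regroup (r m : ℕ) : (⨂[k]^(r * m) V) ≃ₗ[k] ⨂[k]^r (⨂[k]^m V) :=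
  let b := Module.Basis.ofVectorSpace k V
  (Basis.piTensorProduct fun _ => b).equiv
    (Basis.piTensorProduct fun _ => Basis.piTensorProduct fun _ => b)
    ((finProdFinEquiv.arrowCongr (Equiv.refl _)).symm.trans (Equiv.curry _ _ _))

theorem regroup_tprod {r m : ℕ} (v : Fin (r * m) → V) :
    regroup k V r m (tprod k v) = tprod k fun i => tprod k fun j => v (finProdFinEquiv (i, j)) := by
  let F := ((tprod k : MultilinearMap k (fun _ : Fin r => ⨂[k]^m V) _).compMultilinearMap
    fun _ => (tprod k : MultilinearMap k (fun _ : Fin m => V) _)).domDomCongr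
    ((Equiv.sigmaEquivProd _ _).trans finProdFinEquiv)
  have hF : (regroup k V r m).toLinearMap = lift F :=
    (Basis.piTensorProduct fun _ => Module.Basis.ofVectorSpace k V).ext fun f => by
      rw [LinearEquiv.coe_coe, regroup, Module.Basis.equiv_apply]
      simp only [Basis.piTensorProduct_apply, F, lift.tprod, MultilinearMap.domDomCongr_apply,
        MultilinearMap.compMultilinearMap_apply]
      rfl
  rw [← LinearEquiv.coe_coe, hF, lift.tprod]
  rfl

theorem regroup_symm_tprod {r m : ℕ} (x : Fin r → Fin m → V) :
    (regroup k V r m).symm (tprod k fun i => tprod k (x i)) =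
      tprod k fun p => x (finProdFinEquiv.symm p).1 (finProdFinEquiv.symm p).2 := by
  rw [LinearEquiv.symm_apply_eq, regroup_tprod]
  simp

theorem regroup_ext {r m : ℕ} {L₁ L₂ : (⨂[k]^r (⨂[k]^m V)) →ₗ[k] M}
    (h : ∀ x : Fin r → Fin m → V,
      L₁ (tprod k fun i => tprod k (x i)) = L₂ (tprod k fun i => tprod k (x i))) :
    L₁ = L₂ := by
  have h' : L₁ ∘ₗ (regroup k V r m).toLinearMap = L₂ ∘ₗ (regroup k V r m).toLinearMap :=
    PiTensorProduct.ext <| MultilinearMap.ext fun v => by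
      simpa [regroup_tprod] using h fun i j => v (finProdFinEquiv (i, j))
  refine LinearMap.ext fun y => ?_
  simpa using LinearMap.congr_fun h' ((regroup k V r m).symm y)

end TensorPower

section Wreath

variable (r m : ℕ)

/-- `S_m ≀ S_r`, the block of `p : Fin (r * m)` being `(finProdFinEquiv.symm p).1 = p / m`. -/
def wreathSubgroup : Subgroup (Equiv.Perm (Fin (r * m))) where
  carrier := {σ | ∃ τ : Equiv.Perm (Fin r), ∀ p,
    (finProdFinEquiv.symm (σ p)).1 = τ (finProdFinEquiv.symm p).1}
  one_mem' := ⟨1, fun _ => rfl⟩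
  mul_mem' := by
    rintro σ₁ σ₂ ⟨τ₁, h₁⟩ ⟨τ₂, h₂⟩
    exact ⟨τ₁ * τ₂, fun p => by
      rw [Equiv.Perm.mul_apply, h₁, h₂, Equiv.Perm.mul_apply]⟩
  inv_mem' := by
    rintro σ ⟨τ, h⟩
    refine ⟨τ⁻¹, fun p => ?_⟩
    rw [Equiv.Perm.eq_inv_iff_eq, ← h, ← Equiv.Perm.mul_apply, mul_inv_cancel,
      Equiv.Perm.one_apply]

variable {r m}

theorem mem_wreathSubgroup_iff (σ : Equiv.Perm (Fin (r * m))) :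
    σ ∈ wreathSubgroup r m ↔ BlockWreath r m σ := by
  simp only [wreathSubgroup, Subgroup.mem_mk, Submonoid.mem_mk, Subsemigroup.mem_mk,
    Set.mem_ofPred_eq, BlockWreath, finProdFinEquiv_symm_apply, Fin.ext_iff, Fin.coe_divNat]
  refine exists_congr fun τ => ⟨fun h i j hj => ?_, fun h p => h _ p rfl⟩
  rw [h j]
  congr 2
  exact Fin.ext hj

def shearPerm (τ : Equiv.Perm (Fin r)) (π : Fin r → Equiv.Perm (Fin m)) :
    Equiv.Perm (Fin (r * m)) :=
  finProdFinEquiv.permCongr (Equiv.prodShear τ π)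

theorem shearPerm_mem (τ : Equiv.Perm (Fin r)) (π : Fin r → Equiv.Perm (Fin m)) :
    shearPerm τ π ∈ wreathSubgroup r m :=
  ⟨τ, fun p => by simp [shearPerm]⟩

theorem exists_shearPerm_eq {σ : Equiv.Perm (Fin (r * m))} (hσ : σ ∈ wreathSubgroup r m) :
    ∃ τ π, shearPerm τ π = σ := by
  obtain ⟨τ, hτ⟩ := hσ
  set e := (finProdFinEquiv : Fin r × Fin m ≃ Fin (r * m))
  have hinj (i : Fin r) : Function.Injective fun j => (e.symm (σ (e (i, j)))).2 := by
    intro j j' hjj'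
    have : e.symm (σ (e (i, j))) = e.symm (σ (e (i, j'))) :=
      Prod.ext (by simp [hτ]) hjj'
    simpa using this
  refine ⟨τ, fun i => Equiv.ofBijective _ (Finite.injective_iff_bijective.1 (hinj i)), ?_⟩
  ext1 p
  obtain ⟨⟨i, j⟩, rfl⟩ := e.surjective p
  simp only [shearPerm, Equiv.permCongr_apply, Equiv.prodShear_apply, Equiv.ofBijective_apply]
  rw [← hτ, Equiv.symm_apply_apply, Prod.mk.eta, Equiv.apply_symm_apply]

theorem regroup_symm_comp_permRep (τ : Equiv.Perm (Fin r)) :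
    (regroup k V r m).symm.toLinearMap ∘ₗ permRep k (⨂[k]^m V) r τ =
      permRep k V (r * m) (shearPerm τ 1) ∘ₗ (regroup k V r m).symm.toLinearMap := by
  refine regroup_ext fun x => ?_
  simp [permRep_tprod, regroup_symm_tprod, shearPerm, Equiv.permCongr_def, pull_end,
    -finProdFinEquiv_symm_apply]

theorem regroup_symm_comp_map_permRep (π : Fin r → Equiv.Perm (Fin m)) :
    (regroup k V r m).symm.toLinearMap ∘ₗ map (fun i => permRep k V m (π i)) =
      permRep k V (r * m) (shearPerm 1 π) ∘ₗ (regroup k V r m).symm.toLinearMap := by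
  refine regroup_ext fun x => ?_
  simp [permRep_tprod, regroup_symm_tprod, shearPerm, Equiv.permCongr_def, pull_end,
    -finProdFinEquiv_symm_apply]

end Wreath

section Quotient

variable {r m : ℕ}

variable (k V r m) in
def symSymMkQ : (⨂[k]^(r * m) V) →ₗ[k] SymPow k (SymPow k V m) r :=
  symPowMkQ k (SymPow k V m) r ∘ₗ map (fun _ => symPowMkQ k V m) ∘ₗ
    (regroup k V r m).toLinearMap

theorem symSymMkQ_tprod (v : Fin (r * m) → V) :
    symSymMkQ k V r m (tprod k v) = Submodule.Quotient.mk (tprod k fun i =>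
      (Submodule.Quotient.mk (tprod k fun j => v (finProdFinEquiv (i, j))) : SymPow k V m)) := by
  simp [symSymMkQ, symPowMkQ, regroup_tprod]

theorem symSymMkQ_surjective : Function.Surjective (symSymMkQ k V r m) :=
  (Submodule.mkQ_surjective _).comp <|
    (map_surjective fun _ => Submodule.mkQ_surjective _).comp (regroup k V r m).surjective

theorem symSymMkQ_comp_tpowRep (ρ : Representation k G V) (g : G) :
    symSymMkQ k V r m ∘ₗ tpowRep ρ (r * m) g =
      symPowRep (symPowRep ρ m) r g ∘ₗ symSymMkQ k V r m :=
  PiTensorProduct.ext <| MultilinearMap.ext fun v => by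
    simp [symSymMkQ_tprod, tpowRep_tprod, symPowRep_mk]

theorem symSymMkQ_comp_permRep {σ : Equiv.Perm (Fin (r * m))} (hσ : σ ∈ wreathSubgroup r m) :
    symSymMkQ k V r m ∘ₗ permRep k V (r * m) σ = symSymMkQ k V r m := by
  obtain ⟨τ, π, hσ'⟩ := exists_shearPerm_eq ((wreathSubgroup r m).inv_mem hσ)
  refine PiTensorProduct.ext <| MultilinearMap.ext fun v => ?_
  have hv (i : Fin r) (j : Fin m) :
      v (σ.symm (finProdFinEquiv (i, j))) = v (finProdFinEquiv (τ i, π i j)) := by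
    rw [← Equiv.Perm.inv_def, ← hσ']
    simp [shearPerm]
  have hblock (i : Fin r) :
      (Submodule.Quotient.mk (tprod k fun j => v (finProdFinEquiv (τ i, π i j))) : SymPow k V m) =
        Submodule.Quotient.mk (tprod k fun j => v (finProdFinEquiv (τ i, j))) :=
    symPow_mk_tprod_perm (fun j => v (finProdFinEquiv (τ i, j))) (π i)
  simp only [LinearMap.compMultilinearMap_apply, LinearMap.comp_apply, permRep_tprod,
    symSymMkQ_tprod, hv, hblock]
  exact symPow_mk_tprod_perm (M := SymPow k V m)
    (fun i => Submodule.Quotient.mk (tprod k fun j => v (finProdFinEquiv (i, j)))) τ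

variable (k V r m) in
abbrev wreathRep : Representation k (wreathSubgroup r m) (⨂[k]^(r * m) V) :=
  (permRep k V (r * m)).comp (wreathSubgroup r m).subtype

theorem mem_relVec_iff_mem_invariants (ρ : Representation k G V) (x : ⨂[k]^(r * m) V) :
    x ∈ relVec ({p | ∃ g : G, p = (tpowRep ρ (r * m) g, 1)} ∪
        {p | ∃ σ : Equiv.Perm (Fin (r * m)), BlockWreath r m σ ∧
          p = (permRep k V (r * m) σ, (1 : k))}) ↔
      x ∈ (tpowRep ρ (r * m)).invariants ∧ x ∈ (wreathRep k V r m).invariants := by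
  refine ⟨fun hx => ⟨fun g => ?_, fun σ => ?_⟩, ?_⟩
  · simpa using hx _ (Or.inl ⟨g, rfl⟩)
  · simpa using hx _ (Or.inr ⟨σ, (mem_wreathSubgroup_iff _).1 σ.2, rfl⟩)
  · rintro ⟨hG, hK⟩ p (⟨g, rfl⟩ | ⟨σ, hσ, rfl⟩)
    · simpa using hG g
    · simpa using hK ⟨σ, (mem_wreathSubgroup_iff σ).2 hσ⟩

end Quotient

section Symmetrization

variable [CharZero k] {r m : ℕ}

variable (k V) in
def symmetrize (n : ℕ) : SymPow k V n →ₗ[k] ⨂[k]^n V :=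
  symPowLift (permRep k V n).averageMap (permRep k V n).averageMap_comp

noncomputable instance (r m : ℕ) : Fintype (wreathSubgroup r m) := Fintype.ofFinite _

variable (k V r m) in
abbrev wreathAverage : (⨂[k]^(r * m) V) →ₗ[k] ⨂[k]^(r * m) V :=
  (wreathRep k V r m).averageMap

theorem wreathAverage_comp_permRep {σ : Equiv.Perm (Fin (r * m))}
    (hσ : σ ∈ wreathSubgroup r m) :
    wreathAverage k V r m ∘ₗ permRep k V (r * m) σ = wreathAverage k V r m :=
  (wreathRep k V r m).averageMap_comp ⟨σ, hσ⟩

theorem wreathAverage_comp_tpowRep (ρ : Representation k G V) (g : G) :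
    wreathAverage k V r m ∘ₗ tpowRep ρ (r * m) g =
      tpowRep ρ (r * m) g ∘ₗ wreathAverage k V r m :=
  ((wreathRep k V r m).averageMap_comp_comm fun σ => (perm_tpow_comm ρ (r * m) σ g).symm).symm

theorem wreathAverage_comp_regroup_symm_comp_map_averageMap :
    wreathAverage k V r m ∘ₗ (regroup k V r m).symm.toLinearMap ∘ₗ
        map (fun _ => (permRep k V m).averageMap) =
      wreathAverage k V r m ∘ₗ (regroup k V r m).symm.toLinearMap := by
  have hmap : map (fun _ : Fin r => (permRep k V m).averageMap) =
      (∏ _ : Fin r, ⅟(Fintype.card (Equiv.Perm (Fin m)) : k)) •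
        ∑ π : Fin r → Equiv.Perm (Fin m), map fun i => permRep k V m (π i) := by
    simp_rw [Representation.averageMap_eq_sum, ← mapMultilinear_apply,
      MultilinearMap.map_smul_univ, MultilinearMap.map_sum]
  have hπ (π : Fin r → Equiv.Perm (Fin m)) (y : ⨂[k]^r (⨂[k]^m V)) :
      wreathAverage k V r m ((regroup k V r m).symm (map (fun i => permRep k V m (π i)) y)) =
        wreathAverage k V r m ((regroup k V r m).symm y) := by
    rw [← LinearEquiv.coe_coe, ← LinearMap.comp_apply _ (map _), regroup_symm_comp_map_permRep,
      ← LinearMap.comp_apply, ← LinearMap.comp_assoc,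
      wreathAverage_comp_permRep (shearPerm_mem 1 π)]
    rfl
  refine LinearMap.ext fun y => ?_
  simp only [hmap, LinearMap.comp_apply, LinearMap.smul_apply, LinearMap.sum_apply, map_smul,
    map_sum, LinearEquiv.coe_coe, hπ, Finset.sum_const, Finset.card_univ, Fintype.card_pi,
    Finset.prod_const, ← Nat.cast_smul_eq_nsmul k, smul_smul, Nat.cast_pow, ← mul_pow,
    invOf_mul_self, one_pow, one_smul]

theorem wreathAverage_comp_regroup_symm_comp_map_symmetrize (τ : Equiv.Perm (Fin r)) :
    (wreathAverage k V r m ∘ₗ (regroup k V r m).symm.toLinearMap ∘ₗ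
        map fun _ => symmetrize k V m) ∘ₗ permRep k (SymPow k V m) r τ =
      wreathAverage k V r m ∘ₗ (regroup k V r m).symm.toLinearMap ∘ₗ
        map fun _ => symmetrize k V m := by
  refine LinearMap.ext fun y => ?_
  have h₁ := LinearMap.congr_fun (map_comp_permRep (symmetrize k V m) τ) y
  have h₂ := LinearMap.congr_fun (regroup_symm_comp_permRep (k := k) (V := V) (m := m) τ)
    (map (fun _ => symmetrize k V m) y)
  have h₃ := LinearMap.congr_fun
    (wreathAverage_comp_permRep (k := k) (V := V) (shearPerm_mem τ 1))
    ((regroup k V r m).symm (map (fun _ => symmetrize k V m) y))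
  simp only [LinearMap.comp_apply, LinearEquiv.coe_coe] at h₁ h₂ h₃ ⊢
  rw [h₁, h₂, h₃]

variable (k V r m) in
def symSymSection : SymPow k (SymPow k V m) r →ₗ[k] ⨂[k]^(r * m) V :=
  symPowLift (wreathAverage k V r m ∘ₗ (regroup k V r m).symm.toLinearMap ∘ₗ
    map fun _ => symmetrize k V m) wreathAverage_comp_regroup_symm_comp_map_symmetrize

theorem symSymSection_comp_symSymMkQ :
    symSymSection k V r m ∘ₗ symSymMkQ k V r m = wreathAverage k V r m := by
  have hs : symmetrize k V m ∘ₗ symPowMkQ k V m = (permRep k V m).averageMap :=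
    symPowLift_comp_symPowMkQ _ _
  calc symSymSection k V r m ∘ₗ symSymMkQ k V r m
      = wreathAverage k V r m ∘ₗ (regroup k V r m).symm.toLinearMap ∘ₗ
          (map (fun _ => symmetrize k V m) ∘ₗ map fun _ => symPowMkQ k V m) ∘ₗ
            (regroup k V r m).toLinearMap := by
        rw [symSymMkQ, ← LinearMap.comp_assoc, symSymSection, symPowLift_comp_symPowMkQ]
        rfl
    _ = (wreathAverage k V r m ∘ₗ (regroup k V r m).symm.toLinearMap ∘ₗ
          map fun _ => (permRep k V m).averageMap) ∘ₗ (regroup k V r m).toLinearMap := by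
        rw [← map_comp, hs]
        rfl
    _ = wreathAverage k V r m := by
        rw [wreathAverage_comp_regroup_symm_comp_map_averageMap, LinearMap.comp_assoc,
          LinearEquiv.symm_comp, LinearMap.comp_id]

theorem symSymMkQ_comp_symSymSection :
    symSymMkQ k V r m ∘ₗ symSymSection k V r m = LinearMap.id := by
  have hq : symSymMkQ k V r m ∘ₗ wreathAverage k V r m = symSymMkQ k V r m :=
    (wreathRep k V r m).comp_averageMap_of_forall_comp fun σ => symSymMkQ_comp_permRep σ.2
  refine LinearMap.ext fun y => ?_
  obtain ⟨x, rfl⟩ := symSymMkQ_surjective (k := k) (V := V) (r := r) (m := m) y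
  rw [LinearMap.comp_apply, ← LinearMap.comp_apply (symSymSection k V r m),
    symSymSection_comp_symSymMkQ, ← LinearMap.comp_apply, hq, LinearMap.id_apply]

end Symmetrization

theorem finrank_invariants_symPow_symPow_general [CharZero k]
    (r m : ℕ) (ρ : Representation k G V) :
    Module.finrank k (symPowRep (symPowRep ρ m) r).invariants =
      Module.finrank k (relVec ({p | ∃ g : G, p = (tpowRep ρ (r * m) g, 1)} ∪
        {p | ∃ σ : Equiv.Perm (Fin (r * m)), BlockWreath r m σ ∧
          p = (permRep k V (r * m) σ, (1 : k))})) := by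
  have hsq := symSymSection_comp_symSymMkQ (k := k) (V := V) (r := r) (m := m)
  refine Representation.finrank_invariants_eq_of_comp_eq_id (symSymMkQ k V r m)
    (symSymSection k V r m) symSymMkQ_comp_symSymSection (symSymMkQ_comp_tpowRep ρ)
    (fun g => ?_) _ fun x => ?_
  · rw [hsq]
    exact wreathAverage_comp_tpowRep ρ g
  · rw [mem_relVec_iff_mem_invariants, ← LinearMap.comp_apply (symSymSection k V r m), hsq,
      Representation.averageMap_apply_eq_self_iff]

/-- In characteristic 0, the dimension of the space of `G`-invariant
vectors in `Sym^r(Sym^m V)` equals the dimension of the subspace of `K`-fixed vectors in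
`(V^{⊗rm})^G`, where `K ≅ S_m ≀ S_r` is the wreath-product subgroup of `S_{rm}` permuting
the `r` consecutive blocks of size `m`, acting by permuting the tensor factors. -/
theorem finrank_invariants_symPow_symPow [CharZero k] [FiniteDimensional k V]
    (r m : ℕ) (ρ : Representation k G V) :
    Module.finrank k (symPowRep (symPowRep ρ m) r).invariants =
      Module.finrank k (relVec ({p | ∃ g : G, p = (tpowRep ρ (r * m) g, 1)} ∪
        {p | ∃ σ : Equiv.Perm (Fin (r * m)), BlockWreath r m σ ∧
          p = (permRep k V (r * m) σ, (1 : k))})) :=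
  finrank_invariants_symPow_symPow_general r m ρ

end TensorInv
end
end

section
/- Let n ≥ 1 and r be natural numbers and let V = ℂ^n be the defining representation of the special linear group SL(n, ℂ). If n does not divide r, then the space of SL(n, ℂ)-invariant vectors in the r-th tensor power V^{⊗r} is zero: (V^{⊗r})^{SL(n,ℂ)} = 0. -/
/-!
Formalization of statements from "Tensor invariants" (arXiv:1402.6111).
-/

open scoped TensorProduct

noncomputable section

namespace TensorInv

variable {k G V W : Type} [Field k] [Group G]
  [AddCommGroup V] [Module k V] [AddCommGroup W] [Module k W]

/-- The defining representation of `SL(n, ℂ)` on `ℂⁿ`, by matrix-vector multiplication. -/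
def slRep (n : ℕ) : Representation ℂ (Matrix.SpecialLinearGroup (Fin n) ℂ) (Fin n → ℂ) where
  toFun g := Matrix.mulVecLin g.1
  map_one' := by simp [Matrix.mulVecLin_one]; rfl
  map_mul' g h := by
    show Matrix.mulVecLin (g.1 * h.1) = _
    rw [Matrix.mulVecLin_mul]; rfl

/-! A primitive `n`-th root of unity `ζ` gives the scalar matrix `ζ • 1 ∈ SL(n, ℂ)`, which acts on
`(ℂⁿ)^{⊗r}` as the scalar `ζ ^ r ≠ 1` and so fixes only `0`. -/

lemma invariants_eq_bot_of_apply_eq_smul (ρ : Representation k G V) {g : G} {c : k}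
    (hc : c ≠ 1) (hg : ∀ v, ρ g v = c • v) : ρ.invariants = ⊥ := by
  refine eq_bot_iff.2 fun x hx => (Submodule.mem_bot k).2 ?_
  have hx' : (c - 1) • x = 0 := by rw [sub_smul, one_smul, ← hg, hx g, sub_self]
  exact (smul_eq_zero.1 hx').resolve_left (sub_ne_zero.2 hc)

lemma tpowRep_apply_tprod (ρ : Representation k G V) (r : ℕ) (g : G) (v : Fin r → V) :
    tpowRep ρ r g (PiTensorProduct.tprod k v) = PiTensorProduct.tprod k fun i => ρ g (v i) :=
  PiTensorProduct.map_tprod _ _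

lemma tpowRep_apply_eq_pow_smul {ρ : Representation k G V} {g : G} {c : k}
    (hg : ∀ v, ρ g v = c • v) (r : ℕ) (x : ⨂[k]^r V) : tpowRep ρ r g x = c ^ r • x := by
  induction x using PiTensorProduct.induction_on with
  | smul_tprod a v =>
    rw [map_smul, tpowRep_apply_tprod, funext fun i => hg (v i), MultilinearMap.map_smul_univ,
      Finset.prod_const, Finset.card_univ, Fintype.card_fin, smul_comm]
  | add x y hx hy => rw [map_add, hx, hy, smul_add]

def scalarSpecialLinear {ι R : Type} [Fintype ι] [DecidableEq ι] [CommRing R] (c : R)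
    (hc : c ^ Fintype.card ι = 1) : Matrix.SpecialLinearGroup ι R :=
  ⟨Matrix.scalar ι c, by rw [Matrix.scalar_apply, Matrix.det_diagonal, Finset.prod_const,
    Finset.card_univ, hc]⟩

lemma slRep_scalarSpecialLinear_apply {n : ℕ} (c : ℂ) (hc : c ^ Fintype.card (Fin n) = 1)
    (v : Fin n → ℂ) : slRep n (scalarSpecialLinear c hc) v = c • v := by
  show (Matrix.scalar (Fin n) c).mulVec v = c • v
  ext i
  simp [Matrix.scalar_apply, Matrix.mulVec_diagonal]

/-- If `n` does not divide `r`, the space of `SL(n, ℂ)`-invariant vectors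
in `(ℂⁿ)^{⊗r}` is zero. -/
theorem invariants_tpow_slRep_eq_bot (n r : ℕ) (hn : 1 ≤ n) (h : ¬ n ∣ r) :
    (tpowRep (slRep n) r).invariants = ⊥ := by
  obtain ⟨ζ, hζ⟩ : ∃ ζ : ℂ, IsPrimitiveRoot ζ n :=
    ⟨_, Complex.isPrimitiveRoot_exp n (by omega)⟩
  have hζn : ζ ^ Fintype.card (Fin n) = 1 := by rw [Fintype.card_fin, hζ.pow_eq_one]
  have hζr : ζ ^ r ≠ 1 := fun hζr => h ((hζ.pow_eq_one_iff_dvd r).1 hζr)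
  exact invariants_eq_bot_of_apply_eq_smul _ hζr
    (tpowRep_apply_eq_pow_smul (slRep_scalarSpecialLinear_apply ζ hζn) r)

end TensorInv
end
end

section
/- Let n ≥ 1 and r be natural numbers, and let V = ℂ^n be the defining permutation representation of the symmetric group S_n, acting by permuting the standard basis vectors. Then the dimension of the space of S_n-invariant vectors in V^{⊗r} equals the number of partitions of the set {1, …, r} into at most n nonempty blocks. -/
/-!
Formalization of statements from "Tensor invariants" (arXiv:1402.6111).
-/

open scoped TensorProduct

noncomputable section

namespace TensorInv

variable {k G V W : Type} [Field k] [Group G]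
  [AddCommGroup V] [Module k V] [AddCommGroup W] [Module k W]

/-- The defining permutation representation of the symmetric group `S_n` on `ℂⁿ`:
`(σ • v) i = v (σ⁻¹ i)`, i.e. `σ` permutes the standard basis vectors. -/
def permutationRep (n : ℕ) : Representation ℂ (Equiv.Perm (Fin n)) (Fin n → ℂ) where
  toFun σ := LinearMap.funLeft ℂ ℂ ⇑σ⁻¹
  map_one' := by ext v i; simp [LinearMap.funLeft]
  map_mul' σ τ := by ext v i; simp [LinearMap.funLeft]

/-!
The standard basis of `ℂⁿ` yields a basis of `⨂^r ℂⁿ` indexed by the maps `Fin r → Fin n`, and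
`S_n` permutes this basis through its action on the values of the maps. The invariants of such
a permutation representation are the functions constant on orbits, so their dimension is the
number of orbits. Two maps lie in the same orbit exactly when they have the same kernel, i.e. the
same partition of `Fin r` into fibres, and a partition of `Fin r` is the kernel of some map to
`Fin n` exactly when it has at most `n` blocks.
-/

end TensorInv

instance Setoid.decidableRelKer {α β : Type*} [DecidableEq β] (f : α → β) :
    DecidableRel (Setoid.ker f) :=
  fun a b => decidable_of_iff (f a = f b) Setoid.ker_def.symm

namespace Finpartition

theorem parts_eq_image_part {α : Type*} [DecidableEq α] {s : Finset α} (P : Finpartition s) :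
    P.parts = s.image P.part := by
  ext t
  refine ⟨fun ht => ?_, fun ht => ?_⟩
  · obtain ⟨a, ha, rfl⟩ := P.part_surjOn ht
    exact Finset.mem_image_of_mem _ ha
  · obtain ⟨a, ha, rfl⟩ := Finset.mem_image.1 ht
    exact P.part_mem.2 ha

theorem ext_part {α : Type*} [DecidableEq α] {s : Finset α} {P Q : Finpartition s}
    (h : ∀ a, P.part a = Q.part a) : P = Q :=
  Finpartition.ext <| by rw [P.parts_eq_image_part, Q.parts_eq_image_part, funext h]

variable {α : Type*} [Fintype α] [DecidableEq α]

theorem ofSetoid_inj {s t : Setoid α} [DecidableRel s] [DecidableRel t] :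
    ofSetoid s = ofSetoid t ↔ s = t := by
  refine ⟨fun h => Setoid.ext fun a b => ?_, fun h => by subst h; congr⟩
  rw [← mem_part_ofSetoid_iff_rel, h, mem_part_ofSetoid_iff_rel]

theorem ofSetoid_ker_part (P : Finpartition (Finset.univ : Finset α)) :
    ofSetoid (Setoid.ker P.part) = P :=
  ext_part fun a => by
    ext b
    rw [mem_part_ofSetoid_iff_rel, Setoid.ker_def,
      P.mem_part_iff_part_eq_part (Finset.mem_univ b) (Finset.mem_univ a), eq_comm]

theorem card_parts_ofSetoid_ker_le {β : Type*} [Fintype β] [DecidableEq β] (f : α → β) :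
    (ofSetoid (Setoid.ker f)).parts.card ≤ Fintype.card β := by
  have hpart : (ofSetoid (Setoid.ker f)).part = (fun b => Finset.univ.filter (b = f ·)) ∘ f := by
    funext a
    ext b
    simp [mem_part_ofSetoid_iff_rel]
  rw [parts_eq_image_part, hpart, ← Finset.image_image]
  exact Finset.card_image_le.trans (Finset.card_le_univ _)

end Finpartition

theorem MulAction.orbitRel_perm_iff_ker_eq {α β : Type*} [Finite β] {f f' : α → β} :
    orbitRel (Equiv.Perm β) (α → β) f f' ↔ Setoid.ker f = Setoid.ker f' := by
  rw [orbitRel_apply, mem_orbit_iff]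
  constructor
  · rintro ⟨σ, rfl⟩
    ext a b
    simp [σ.injective.eq_iff]
  · intro h
    classical
    -- Equal kernels identify both ranges with the same quotient of `α`; any bijection between
    -- the ranges extends to a permutation of the finite type `β`.
    let e : Set.range f' ≃ Set.range f := (Setoid.quotientKerEquivRange f').symm.trans
      ((Quotient.congrRight fun a b => by rw [h]).trans (Setoid.quotientKerEquivRange f))
    have he (a : α) : (Setoid.quotientKerEquivRange f').symm ⟨f' a, a, rfl⟩ = ⟦a⟧ :=
      (Setoid.quotientKerEquivRange f').symm_apply_eq.2 rfl
    refine ⟨e.extendSubtype, funext fun a => ?_⟩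
    rw [Pi.smul_apply, Equiv.Perm.smul_def, e.extendSubtype_apply_of_mem _ ⟨a, rfl⟩]
    simp only [e, Equiv.trans_apply, he]
    rfl

namespace TensorInv

def orbitRelQuotientEquivFinpartition (α β : Type*) [Fintype α] [DecidableEq α] [Fintype β]
    [DecidableEq β] : MulAction.orbitRel.Quotient (Equiv.Perm β) (α → β) ≃
      {P : Finpartition (Finset.univ : Finset α) // P.parts.card ≤ Fintype.card β} :=
  Equiv.ofBijective
    (Quotient.lift
      (fun f => ⟨Finpartition.ofSetoid (Setoid.ker f),
        Finpartition.card_parts_ofSetoid_ker_le f⟩)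
      fun _ _ h => Subtype.ext <| Finpartition.ofSetoid_inj.2 <|
        MulAction.orbitRel_perm_iff_ker_eq.1 h)
    ⟨fun x y => Quotient.inductionOn₂ x y fun _ _ h =>
      Quotient.sound <| MulAction.orbitRel_perm_iff_ker_eq.2 <|
        Finpartition.ofSetoid_inj.1 (congrArg Subtype.val h),
    fun ⟨P, hP⟩ => by
      obtain ⟨emb⟩ : Nonempty (P.parts ↪ β) :=
        Function.Embedding.nonempty_of_card_le (by simpa using hP)
      let f (a : α) : β := emb ⟨P.part a, P.part_mem.2 (Finset.mem_univ a)⟩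
      have hker : Setoid.ker f = Setoid.ker P.part := by
        ext a b
        simp [f, emb.injective.eq_iff]
      exact ⟨⟦f⟧, Subtype.ext <| (Finpartition.ofSetoid_inj.2 hker).trans P.ofSetoid_ker_part⟩⟩

theorem _root_.Representation.Equiv.finrank_invariants_eq {k G V W : Type*} [CommRing k]
    [Group G] [AddCommGroup V] [Module k V] [AddCommGroup W] [Module k W]
    {ρ : Representation k G V} {σ : Representation k G W} (φ : ρ.Equiv σ) :
    Module.finrank k ρ.invariants = Module.finrank k σ.invariants := by
  have hmap : ρ.invariants.map φ.toLinearEquiv.toLinearMap = σ.invariants := by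
    ext w
    rw [Submodule.mem_map_equiv, Representation.mem_invariants,
      Representation.mem_invariants]
    refine forall_congr' fun g => ?_
    rw [← φ.toLinearEquiv.injective.eq_iff, LinearEquiv.apply_symm_apply,
      φ.toLinearEquiv_apply, φ.toIntertwiningMap.isIntertwining, ← φ.toLinearEquiv_apply,
      LinearEquiv.apply_symm_apply]
  rw [← hmap, LinearEquiv.finrank_map_eq]

def funRep (k G X : Type*) [CommSemiring k] [Group G] [MulAction G X] :
    Representation k G (X → k) where
  toFun g := LinearMap.funLeft k k (g⁻¹ • ·)
  map_one' := by ext; simp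
  map_mul' g h := by ext; simp [mul_smul]

section funRep

variable {k G X : Type*} [Group G] [MulAction G X]

@[simp]
theorem funRep_apply [CommSemiring k] (g : G) (c : X → k) (x : X) :
    funRep k G X g c x = c (g⁻¹ • x) :=
  rfl

variable (k G X)

theorem range_funLeft_quotientMk_eq_invariants [CommRing k] :
    LinearMap.range (LinearMap.funLeft k k (Quotient.mk (MulAction.orbitRel G X))) =
      (funRep k G X).invariants := by
  ext c
  rw [LinearMap.mem_range, Representation.mem_invariants]
  constructor
  · rintro ⟨d, rfl⟩ g
    funext x
    exact congrArg d (Quotient.sound (MulAction.mem_orbit x g⁻¹))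
  · intro hc
    refine ⟨Quotient.lift c fun a b hab => ?_, rfl⟩
    obtain ⟨g, rfl⟩ := MulAction.mem_orbit_iff.1 (MulAction.orbitRel_apply.1 hab)
    simpa using congrFun (hc g⁻¹) b

theorem finrank_invariants_funRep [Field k] [Finite X] :
    Module.finrank k (funRep k G X).invariants = Nat.card (MulAction.orbitRel.Quotient G X) := by
  have := Fintype.ofFinite (MulAction.orbitRel.Quotient G X)
  rw [← range_funLeft_quotientMk_eq_invariants, LinearMap.finrank_range_of_inj
    (LinearMap.funLeft_injective_of_surjective k k _ Quotient.mk_surjective),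
    Module.finrank_fintype_fun_eq_card, Nat.card_eq_fintype_card]

end funRep

def tpowFunRepEquiv (k G X : Type) [Field k] [Group G] [MulAction G X] [Fintype X] (r : ℕ) :
    (tpowRep (funRep k G X) r).Equiv (funRep k G (Fin r → X)) :=
  .mk (Basis.piTensorProduct fun _ => Pi.basisFun k X).equivFun fun g => by
    refine PiTensorProduct.ext <| MultilinearMap.ext fun v => funext fun p => ?_
    simp [tpowRep]

theorem finrank_invariants_tpow_permutationRep_general (n r : ℕ) :
    Module.finrank ℂ ((tpowRep (permutationRep n) r).invariants) =
      Nat.card {P : Finpartition (Finset.univ : Finset (Fin r)) // P.parts.card ≤ n} := by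
  have hperm : permutationRep n = funRep ℂ (Equiv.Perm (Fin n)) (Fin n) := rfl
  rw [hperm, (tpowFunRepEquiv ℂ _ (Fin n) r).finrank_invariants_eq, finrank_invariants_funRep,
    Nat.card_congr (orbitRelQuotientEquivFinpartition (Fin r) (Fin n)), Fintype.card_fin]

/-- The dimension of the space of `S_n`-invariant vectors in the `r`-th
tensor power of the defining permutation representation `ℂⁿ` equals the number of partitions
of the set `{1, …, r}` into at most `n` nonempty blocks. -/
theorem finrank_invariants_tpow_permutationRep (n r : ℕ) (hn : 1 ≤ n) :
    Module.finrank ℂ ((tpowRep (permutationRep n) r).invariants) =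
      Nat.card {P : Finpartition (Finset.univ : Finset (Fin r)) // P.parts.card ≤ n} :=
  finrank_invariants_tpow_permutationRep_general n r

end TensorInv
end
end

section
/- Let n and r be natural numbers with n ≥ r ≥ 0, and let W = M_n(ℂ) be the adjoint representation of GL(n, ℂ), i.e. GL(n, ℂ) acting on the space of n×n complex matrices by conjugation, g·X = gXg⁻¹. Then the dimension of the space of GL(n, ℂ)-invariant vectors in W^{⊗r} equals r!. -/
/-!
Identify `⨂[ℂ]^r M_n(ℂ)` with the matrices indexed by pairs of maps `Fin r → Fin n`, i.e. with
`End((ℂⁿ)^⊗r)`; the diagonal conjugation action becomes conjugation by the Kronecker power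
`g^⊗r`, so the invariants are the matrices commuting with every `g^⊗r`, hence (by Zariski density
of `GL_n`) with every `A^⊗r`. Commuting with `A^⊗r` for the diagonal matrix killing the basis
vector `e_j`, and for the partial map `e_j ↦ e_{q j}` (`j < r`, which needs `r ≤ n`), forces such a
matrix to be a linear combination of the `r!` permutations of the tensor factors. These are
invariant and linearly independent.
-/

open scoped TensorProduct

noncomputable section

namespace TensorInv

variable {k G V W : Type} [Field k] [Group G]
  [AddCommGroup V] [Module k V] [AddCommGroup W] [Module k W]

/-- The adjoint representation of `GL(n, ℂ)` on the space of `n × n` complex matrices,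
`g • X = g * X * g⁻¹`. -/
def adjRep (n : ℕ) :
    Representation ℂ (GL (Fin n) ℂ) (Matrix (Fin n) (Fin n) ℂ) where
  toFun g := (LinearMap.mulLeft ℂ (g : Matrix (Fin n) (Fin n) ℂ)).comp
    (LinearMap.mulRight ℂ ((g⁻¹ : GL (Fin n) ℂ) : Matrix (Fin n) (Fin n) ℂ))
  map_one' := by ext X; simp
  map_mul' g h := by ext X; simp [Matrix.mul_assoc]

open Matrix

section kronecker

variable {ι m k : Type} [Fintype ι] [CommRing k]

def piKron (A : ι → Matrix m m k) : Matrix (ι → m) (ι → m) k :=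
  of fun p q => ∏ a, A a (p a) (q a)

@[simp]
lemma piKron_apply (A : ι → Matrix m m k) (p q : ι → m) :
    piKron A p q = ∏ a, A a (p a) (q a) := rfl

lemma piKron_mul [DecidableEq ι] [Fintype m] (A B : ι → Matrix m m k) :
    piKron (A * B) = piKron A * piKron B := by
  ext p q
  simp only [piKron_apply, Pi.mul_apply, mul_apply, Finset.prod_univ_sum, Fintype.piFinset_univ,
    Finset.prod_mul_distrib]

lemma piKron_diagonal [DecidableEq m] (d : ι → m → k) :
    piKron (fun a => diagonal (d a)) = diagonal fun p => ∏ a, d a (p a) := by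
  ext p q
  by_cases h : p = q
  · simp [h]
  · obtain ⟨a, ha⟩ := Function.ne_iff.mp h
    rw [piKron_apply, diagonal_apply_ne _ h]
    exact Finset.prod_eq_zero (Finset.mem_univ a) (diagonal_apply_ne (d a) ha)

lemma piKron_one [DecidableEq m] : piKron (fun _ : ι => (1 : Matrix m m k)) = 1 := by
  simpa using piKron_diagonal (ι := ι) fun _ => (1 : m → k)

variable (ι) [DecidableEq ι] [Fintype m] [DecidableEq m]

def kronPow : Matrix m m k →* Matrix (ι → m) (ι → m) k where
  toFun A := piKron fun _ => A
  map_one' := piKron_one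
  map_mul' A B := piKron_mul (fun _ => A) (fun _ => B)

variable {ι}

lemma kronPow_apply (A : Matrix m m k) (p q : ι → m) :
    kronPow ι A p q = ∏ a, A (p a) (q a) := rfl

lemma kronPow_map {k' : Type} [CommRing k'] (f : k →+* k') (A : Matrix m m k) :
    (kronPow ι A).map f = kronPow ι (A.map f) := by
  ext p q
  simp [kronPow_apply]

end kronecker

section tensorCoords

variable {ι m k : Type} [Fintype ι] [Fintype m] [Field k]

def tensorCoords : (⨂[k] _ : ι, Matrix m m k) ≃ₗ[k] Matrix (ι → m) (ι → m) k :=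
  (Basis.piTensorProduct fun _ => stdBasis k m m).equivFun ≪≫ₗ
    LinearEquiv.funCongrLeft k k (Equiv.arrowProdEquivProdArrow ι _ _).symm ≪≫ₗ
    LinearEquiv.curry k k _ _ ≪≫ₗ ofLinearEquiv k

lemma tensorCoords_tprod (M : ι → Matrix m m k) :
    tensorCoords (PiTensorProduct.tprod k M) = piKron M := by
  ext p q
  simp [tensorCoords, stdBasis]

end tensorCoords

section density

open Polynomial

variable {ι m k : Type} [Fintype ι] [DecidableEq ι] [Fintype m] [DecidableEq m]

lemma map_eval_charmatrix [CommRing k] (A : Matrix m m k) (t : k) :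
    (charmatrix A).map (eval t) = scalar m t - A := by
  ext i j
  by_cases h : i = j
  · simp [h, charmatrix_apply_eq]
  · simp [h]

/-- The commutator with `kronPow ι (A + t • 1)` is polynomial in `t` and vanishes whenever `t` is
not a root of the characteristic polynomial of `-A`. -/
lemma commute_kronPow_of_forall_isUnit_det [Field k] [Infinite k] {C : Matrix (ι → m) (ι → m) k}
    (h : ∀ A : Matrix m m k, IsUnit A.det → Commute (kronPow ι A) C) (A : Matrix m m k) :
    Commute (kronPow ι A) C := by
  set D := kronPow ι (charmatrix (-A)) * C.map Polynomial.C -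
    C.map Polynomial.C * kronPow ι (charmatrix (-A))
  have hD : ∀ t, D.map (eval t) =
      kronPow ι (scalar m t - -A) * C - C * kronPow ι (scalar m t - -A) := by
    intro t
    change (evalRingHom t).mapMatrix D = _
    simp only [D, map_sub, map_mul, RingHom.mapMatrix_apply, kronPow_map]
    simp only [coe_evalRingHom, map_eval_charmatrix, Matrix.map_map, Function.comp_def, eval_C,
      Matrix.map_id']
  have hD0 : D = 0 := by
    refine Matrix.ext fun p q => eq_zero_of_infinite_isRoot _ <|
      ((finite_setOfPred_isRoot (-A).charpoly_monic.ne_zero).infinite_compl).mono fun t ht => ?_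
    have hdet : IsUnit (scalar m t - -A).det := by
      rw [← eval_charpoly]
      exact isUnit_iff_ne_zero.mpr ht
    have := congr_fun₂ (hD t) p q
    rwa [(h _ hdet).eq, sub_self, Matrix.zero_apply, map_apply] at this
  simpa [hD0, sub_eq_zero, Commute, SemiconjBy] using (hD 0).symm

end density

section commutant

open Function

variable {ι m k : Type} [Fintype ι] [DecidableEq ι] [DecidableEq m] [Field k]

def permMatrix (σ : Equiv.Perm ι) : Matrix (ι → m) (ι → m) k :=
  of fun p q => if p = q ∘ σ then 1 else 0

lemma linearIndependent_permMatrix {e : ι → m} (he : Injective e) :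
    LinearIndependent k (permMatrix : Equiv.Perm ι → Matrix (ι → m) (ι → m) k) := by
  rw [Fintype.linearIndependent_iff]
  intro c hc τ
  have hστ : ∀ σ : Equiv.Perm ι, e ∘ τ = e ∘ σ ↔ σ = τ := fun σ =>
    ⟨fun h => Equiv.ext fun a => (he (congr_fun h a)).symm, fun h => h ▸ rfl⟩
  simpa [permMatrix, Matrix.sum_apply, hστ] using congr_fun₂ hc (e ∘ τ) e

lemma sum_perm_eq_sum_of_surjective {M : Type} [AddCommMonoid M] (f : (ι → ι) → M)
    (hf : ∀ μ, f μ ≠ 0 → Surjective μ) :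
    ∑ σ : Equiv.Perm ι, f σ = ∑ μ, f μ := by
  refine Fintype.sum_of_injective _ DFunLike.coe_injective _ _ (fun μ hμ => ?_) fun _ => rfl
  by_contra h
  exact hμ ⟨Equiv.ofBijective μ (hf μ h).bijective_of_finite, rfl⟩

variable [Fintype m]

lemma commute_kronPow_permMatrix (A : Matrix m m k) (σ : Equiv.Perm ι) :
    Commute (kronPow ι A) (permMatrix σ) := by
  ext p q
  have hσ : ∀ p' : ι → m, p = p' ∘ σ ↔ p' = p ∘ σ.symm := fun p' => by
    rw [Equiv.eq_comp_symm, eq_comm]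
  simp only [mul_apply, permMatrix, of_apply, mul_ite, mul_one, mul_zero, ite_mul, one_mul,
    zero_mul, hσ, Finset.sum_ite_eq', Finset.mem_univ, if_true, kronPow_apply,
    Function.comp_apply]
  rw [← Equiv.prod_comp σ (fun a => A (p (σ.symm a)) (q a))]
  simp

lemma kronPow_sum_single_apply (q e p p' : ι → m) :
    kronPow ι (∑ j, single (q j) (e j) (1 : k)) p p' =
      ∑ μ : ι → ι, if q ∘ μ = p ∧ e ∘ μ = p' then 1 else 0 := by
  simp only [kronPow_apply, Matrix.sum_apply, single_apply, Finset.prod_univ_sum,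
    Fintype.piFinset_univ, Finset.prod_boole, funext_iff, Function.comp_apply, forall_and]
  simp

variable {C : Matrix (ι → m) (ι → m) k}

lemma surjective_of_commute_kronPow (hC : ∀ A, Commute (kronPow ι A) C) {e : ι → m}
    (he : Injective e) {μ : ι → ι} (hμ : C (e ∘ μ) e ≠ 0) : Surjective μ := by
  intro j
  by_contra! hj
  have := congr_fun₂ (hC (diagonal fun i => if i = e j then 0 else 1)).eq (e ∘ μ) e
  simp only [kronPow, MonoidHom.coe_mk, OneHom.coe_mk, piKron_diagonal, diagonal_mul,
    mul_diagonal, Function.comp_apply] at this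
  rw [Finset.prod_eq_one fun a _ => if_neg (he.ne (hj a)), Finset.prod_eq_zero
    (Finset.mem_univ j) (if_pos rfl : (if e j = e j then (0 : k) else 1) = 0), one_mul,
    mul_zero] at this
  exact hμ this

lemma apply_eq_sum_of_commute_kronPow (hC : ∀ A, Commute (kronPow ι A) C) {e : ι → m}
    (he : Injective e) (p q : ι → m) :
    C p q = ∑ μ : ι → ι, if p = q ∘ μ then C (e ∘ μ) e else 0 := by
  have hid : ∀ μ : ι → ι, e ∘ μ = e ↔ μ = id := fun μ =>
    ⟨fun h => funext fun a => he (congr_fun h a), fun h => h ▸ rfl⟩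
  have := congr_fun₂ (hC (∑ j, single (q j) (e j) 1)).eq p e
  simp only [mul_apply, kronPow_sum_single_apply, Finset.sum_mul, Finset.mul_sum] at this
  simpa [hid, ite_and, eq_comm, Finset.sum_comm (γ := ι → m)] using this.symm

lemma mem_span_permMatrix_of_commute (hC : ∀ A, Commute (kronPow ι A) C) {e : ι → m}
    (he : Injective e) : C ∈ Submodule.span k (Set.range permMatrix) := by
  have hC' : C = ∑ σ : Equiv.Perm ι, C (e ∘ σ) e • permMatrix σ := by
    ext p q
    rw [apply_eq_sum_of_commute_kronPow hC he p q, ← sum_perm_eq_sum_of_surjective]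
    · simp [Matrix.sum_apply, permMatrix]
    · intro μ hμ
      exact surjective_of_commute_kronPow hC he fun h => hμ (by simp [h])
  rw [hC']
  exact Submodule.sum_mem _ fun σ _ => Submodule.smul_mem _ _ (Submodule.subset_span ⟨σ, rfl⟩)

end commutant

section adjoint

variable {n r : ℕ}

lemma adjRep_apply (g : GL (Fin n) ℂ) (X : Matrix (Fin n) (Fin n) ℂ) :
    adjRep n g X = (g : Matrix (Fin n) (Fin n) ℂ) * X * ((g⁻¹ : GL (Fin n) ℂ) : Matrix _ _ ℂ) := by
  simp [adjRep, Matrix.mul_assoc]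

lemma tensorCoords_tpowRep_adjRep (g : GL (Fin n) ℂ) (x : ⨂[ℂ]^r (Matrix (Fin n) (Fin n) ℂ)) :
    tensorCoords (tpowRep (adjRep n) r g x) =
      kronPow (Fin r) (g : Matrix (Fin n) (Fin n) ℂ) * tensorCoords x *
        kronPow (Fin r) ((g⁻¹ : GL (Fin n) ℂ) : Matrix (Fin n) (Fin n) ℂ) := by
  induction x using PiTensorProduct.induction_on with
  | smul_tprod c M =>
    have hM : (fun a => adjRep n g (M a)) = (fun _ => (g : Matrix (Fin n) (Fin n) ℂ)) * M *
        fun _ => ((g⁻¹ : GL (Fin n) ℂ) : Matrix (Fin n) (Fin n) ℂ) :=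
      funext fun a => adjRep_apply g (M a)
    simp only [map_smul, tpowRep, MonoidHom.coe_mk, OneHom.coe_mk, PiTensorProduct.map_tprod,
      tensorCoords_tprod, hM, piKron_mul, Matrix.mul_smul, Matrix.smul_mul]
    rfl
  | add x y hx hy => rw [map_add, map_add, hx, hy, map_add, Matrix.mul_add, Matrix.add_mul]

lemma mem_invariants_tpowRep_adjRep_iff (x : ⨂[ℂ]^r (Matrix (Fin n) (Fin n) ℂ)) :
    x ∈ (tpowRep (adjRep n) r).invariants ↔
      ∀ A, Commute (kronPow (Fin r) A) (tensorCoords x) := by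
  have hconj : ∀ g : GL (Fin n) ℂ, tpowRep (adjRep n) r g x = x ↔
      Commute (kronPow (Fin r) (g : Matrix (Fin n) (Fin n) ℂ)) (tensorCoords x) := by
    intro g
    rw [← tensorCoords.injective.eq_iff, tensorCoords_tpowRep_adjRep, ← Units.coe_map,
      ← Units.coe_map_inv, Units.mul_inv_eq_iff_eq_mul]
    rfl
  rw [Representation.mem_invariants]
  refine ⟨fun h => commute_kronPow_of_forall_isUnit_det fun A hA => ?_,
    fun h g => (hconj g).2 (h g)⟩
  obtain ⟨g, rfl⟩ := (Matrix.isUnit_iff_isUnit_det A).2 hA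
  exact (hconj g).1 (h g)

lemma map_tensorCoords_invariants_tpowRep_adjRep (hrn : r ≤ n) :
    (tpowRep (adjRep n) r).invariants.map (tensorCoords : _ ≃ₗ[ℂ] _).toLinearMap =
      Submodule.span ℂ (Set.range permMatrix) := by
  apply le_antisymm
  · rintro _ ⟨x, hx, rfl⟩
    exact mem_span_permMatrix_of_commute ((mem_invariants_tpowRep_adjRep_iff x).1 hx)
      (Fin.castLE_injective hrn)
  · rw [Submodule.span_le]
    rintro _ ⟨σ, rfl⟩
    refine ⟨tensorCoords.symm (permMatrix σ), (mem_invariants_tpowRep_adjRep_iff _).2 ?_, by simp⟩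
    simpa using fun A => commute_kronPow_permMatrix A σ

end adjoint

/-- For `n ≥ r`, the dimension of the space of `GL(n, ℂ)`-invariant
vectors in the `r`-th tensor power of the adjoint representation `M_n(ℂ)` equals `r!`. -/
theorem finrank_invariants_tpow_adjRep (n r : ℕ) (hrn : r ≤ n) :
    Module.finrank ℂ ((tpowRep (adjRep n) r).invariants) = Nat.factorial r := by
  rw [← LinearEquiv.finrank_map_eq tensorCoords, map_tensorCoords_invariants_tpowRep_adjRep hrn,
    finrank_span_eq_card (linearIndependent_permMatrix (Fin.castLE_injective hrn)),
    Fintype.card_perm, Fintype.card_fin]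

end TensorInv
end
end
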